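/- arXiv:math/0412320 — 5 statements merged into one kernel-verified Lean document; each statement's English description precedes it below -/
import Mathlib

section
/- For every d ≥ 1, Voronoi's first perfect form Q[x] = Σ_{i=1}^d x_i² + Σ_{1≤i<j≤d} x_i x_j (associated with the root lattice A_d) is a perfect positive definite quadratic form. -/
open Matrix

noncomputable section

/-- `Q[x] = xᵀ Q x`. -/
def quadForm {d : ℕ} (Q : Matrix (Fin d) (Fin d) ℝ) (x : Fin d → ℝ) : ℝ :=
  x ⬝ᵥ (Q *ᵥ x)

/-- Coercion of an integer vector to a real vector. -/
def intCast {d : ℕ} (v : Fin d → ℤ) : Fin d → ℝ := fun i => (v i : ℝ)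

/-- A positive definite quadratic form: a symmetric positive definite real matrix. -/
def IsPQF {d : ℕ} (Q : Matrix (Fin d) (Fin d) ℝ) : Prop :=
  Q.IsSymm ∧ Q.PosDef

/-- The homogeneous minimum `λ(Q) = min {Q[v] : v ∈ ℤ^d \ {0}}`. -/
def homMin {d : ℕ} (Q : Matrix (Fin d) (Fin d) ℝ) : ℝ :=
  sInf {r | ∃ v : Fin d → ℤ, v ≠ 0 ∧ r = quadForm Q (intCast v)}

/-- The set of minimal vectors `Min(Q)`. -/
def minVecs {d : ℕ} (Q : Matrix (Fin d) (Fin d) ℝ) : Set (Fin d → ℤ) :=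
  {v | v ≠ 0 ∧ quadForm Q (intCast v) = homMin Q}

/-- The inhomogeneous minimum `μ(Q) = max_{x ∈ ℝ^d} min_{v ∈ ℤ^d} Q[x - v]`. -/
def inhomMin {d : ℕ} (Q : Matrix (Fin d) (Fin d) ℝ) : ℝ :=
  ⨆ x : Fin d → ℝ, ⨅ v : Fin d → ℤ, quadForm Q (x - intCast v)

/-- `κ_d`, the volume of the `d`-dimensional Euclidean unit ball. -/
def ballVol (d : ℕ) : ℝ :=
  (MeasureTheory.volume (Metric.ball (0 : EuclideanSpace ℝ (Fin d)) 1)).toReal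

/-- The packing density `δ(Q)`. -/
def packDensity {d : ℕ} (Q : Matrix (Fin d) (Fin d) ℝ) : ℝ :=
  Real.sqrt (homMin Q ^ d / Q.det) * ballVol d / 2 ^ d

/-- The covering density `Θ(Q)`. -/
def covDensity {d : ℕ} (Q : Matrix (Fin d) (Fin d) ℝ) : ℝ :=
  Real.sqrt (inhomMin Q ^ d / Q.det) * ballVol d

/-- The packing-covering constant `γ(Q)`. -/
def pcConst {d : ℕ} (Q : Matrix (Fin d) (Fin d) ℝ) : ℝ :=
  2 * Real.sqrt (inhomMin Q / homMin Q)

/-- `Q` is perfect: it is the unique symmetric matrix `Q'` with `Q'[v] = λ(Q)`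
for all `v ∈ Min(Q)`. -/
def IsPerfectForm {d : ℕ} (Q : Matrix (Fin d) (Fin d) ℝ) : Prop :=
  ∀ Q' : Matrix (Fin d) (Fin d) ℝ, Q'.IsSymm →
    (∀ v ∈ minVecs Q, quadForm Q' (intCast v) = homMin Q) → Q' = Q

/-- `Q` is eutactic: `Q⁻¹ = Σ_{v ∈ Min(Q)} c_v · v vᵀ` with all `c_v > 0`. -/
def IsEutacticForm {d : ℕ} (Q : Matrix (Fin d) (Fin d) ℝ) : Prop :=
  ∃ (s : Finset (Fin d → ℤ)) (c : (Fin d → ℤ) → ℝ),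
    (s : Set (Fin d → ℤ)) = minVecs Q ∧ (∀ v ∈ s, 0 < c v) ∧
    Q⁻¹ = ∑ v ∈ s, c v • vecMulVec (intCast v) (intCast v)

/-- `Q` is extreme: a local maximum of the packing density among PQFs. -/
def IsExtremeForm {d : ℕ} (Q : Matrix (Fin d) (Fin d) ℝ) : Prop :=
  ∃ ε > (0 : ℝ), ∀ Q' : Matrix (Fin d) (Fin d) ℝ, IsPQF Q' →
    (∀ i j, |Q' i j - Q i j| < ε) → packDensity Q' ≤ packDensity Q

/-- Voronoi's first perfect form: diagonal entries `1`, off-diagonal entries `1/2`. -/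
def voronoiFirstForm (d : ℕ) : Matrix (Fin d) (Fin d) ℝ :=
  Matrix.of fun i j => if i = j then 1 else 1/2

/-!
Since `2 Q[x] = ∑ xᵢ² + (∑ xᵢ)²`, the form is `½ (I + 𝟙𝟙ᵀ)`, hence positive definite. For an
integral `x ≠ 0` the right-hand side is even (as `n² ≡ n mod 2`) and positive, so `λ(Q) = 1`,
attained at every `eₐ` and `eₐ - e_b`. By polarization a symmetric matrix is determined by its
values at these vectors, so `Q` is perfect.
-/

section QuadForm

variable {d : ℕ}

lemma intCast_single (a : Fin d) : intCast (Pi.single a 1) = Pi.single a (1 : ℝ) := by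
  ext i; simp [intCast, Pi.single_apply]

lemma intCast_sub (u v : Fin d → ℤ) : intCast (u - v) = intCast u - intCast v := by
  ext i; simp [intCast]

lemma quadForm_single (M : Matrix (Fin d) (Fin d) ℝ) (a : Fin d) :
    quadForm M (Pi.single a 1) = M a a := by
  simp [quadForm]

lemma quadForm_single_sub_single (M : Matrix (Fin d) (Fin d) ℝ) (a b : Fin d) :
    quadForm M (Pi.single a 1 - Pi.single b 1) = M a a - M a b - M b a + M b b := by
  simp [quadForm, mulVec_sub, sub_dotProduct, dotProduct_sub]
  ring

lemma Matrix.IsSymm.eq_of_quadForm_eq {M N : Matrix (Fin d) (Fin d) ℝ}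
    (hM : M.IsSymm) (hN : N.IsSymm)
    (h_single : ∀ a, quadForm M (Pi.single a 1) = quadForm N (Pi.single a 1))
    (h_sub : ∀ a b, a ≠ b →
      quadForm M (Pi.single a 1 - Pi.single b 1) = quadForm N (Pi.single a 1 - Pi.single b 1)) :
    M = N := by
  have h_diag : ∀ a, M a a = N a a := fun a => by simpa only [quadForm_single] using h_single a
  ext a b
  rcases eq_or_ne a b with rfl | hab
  · exact h_diag a
  · have h := h_sub a b hab
    rw [quadForm_single_sub_single, quadForm_single_sub_single, hM.apply a b, hN.apply a b,
      h_diag a, h_diag b] at h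
    linarith

theorem isPerfectForm_of_single_mem_minVecs {Q : Matrix (Fin d) (Fin d) ℝ} (hQ : Q.IsSymm)
    (h_single : ∀ a, Pi.single a 1 ∈ minVecs Q)
    (h_sub : ∀ a b, a ≠ b → Pi.single a 1 - Pi.single b 1 ∈ minVecs Q) :
    IsPerfectForm Q := by
  intro Q' hQ' h_min
  refine hQ'.eq_of_quadForm_eq hQ (fun a => ?_) (fun a b hab => ?_)
  · simpa only [intCast_single] using (h_min _ (h_single a)).trans (h_single a).2.symm
  · simpa only [intCast_sub, intCast_single] using
      (h_min _ (h_sub a b hab)).trans (h_sub a b hab).2.symm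

end QuadForm

lemma two_le_sum_sq_add_sq_sum {ι : Type*} [Fintype ι] {v : ι → ℤ} (hv : v ≠ 0) :
    2 ≤ ∑ i, v i ^ 2 + (∑ i, v i) ^ 2 := by
  have h_even : Even (∑ i, v i ^ 2 + (∑ i, v i) ^ 2) := by
    have h : ∑ i, v i ^ 2 + (∑ i, v i) ^ 2
        = ∑ i, v i * (v i - 1) + (∑ i, v i) * (∑ i, v i - 1) + 2 * ∑ i, v i := by
      simp only [mul_sub, mul_one, Finset.sum_sub_distrib, sq]
      ring
    rw [h]
    exact ((Finset.even_sum _ fun i _ => Int.even_mul_pred_self (v i)).add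
      (Int.even_mul_pred_self _)).add (even_two_mul _)
  obtain ⟨i, hi⟩ : ∃ i, v i ≠ 0 := Function.ne_iff.mp hv
  have h_pos : 0 < ∑ i, v i ^ 2 :=
    Finset.sum_pos' (fun j _ => sq_nonneg (v j)) ⟨i, Finset.mem_univ i, by positivity⟩
  obtain ⟨k, hk⟩ := h_even
  have := sq_nonneg (∑ i, v i)
  omega

section Voronoi

variable {d : ℕ}

lemma voronoiFirstForm_eq_smul (d : ℕ) :
    voronoiFirstForm d = (2⁻¹ : ℝ) • (1 + vecMulVec 1 1) := by
  ext i j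
  by_cases h : i = j <;> simp [voronoiFirstForm, vecMulVec, one_apply, h]
  norm_num

lemma posDef_voronoiFirstForm (d : ℕ) : (voronoiFirstForm d).PosDef := by
  rw [voronoiFirstForm_eq_smul]
  exact (PosDef.one.add_posSemidef (posSemidef_vecMulVec_self_star 1)).smul (by norm_num)

lemma isSymm_voronoiFirstForm (d : ℕ) : (voronoiFirstForm d).IsSymm :=
  isHermitian_iff_isSymm.mp (posDef_voronoiFirstForm d).isHermitian

lemma two_mul_quadForm_voronoiFirstForm (x : Fin d → ℝ) :
    2 * quadForm (voronoiFirstForm d) x = ∑ i, x i ^ 2 + (∑ i, x i) ^ 2 := by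
  rw [voronoiFirstForm_eq_smul, quadForm, smul_mulVec, add_mulVec, one_mulVec, dotProduct_smul,
    dotProduct_add, vecMulVec_mulVec, dotProduct_smul]
  simp only [one_dotProduct, dotProduct_one, smul_eq_mul, op_smul_eq_mul]
  simp only [dotProduct, ← sq]
  ring

lemma one_le_quadForm_voronoiFirstForm_intCast {v : Fin d → ℤ} (hv : v ≠ 0) :
    1 ≤ quadForm (voronoiFirstForm d) (intCast v) := by
  have h := two_mul_quadForm_voronoiFirstForm (intCast v)
  have h_int : (2 : ℝ) ≤ ∑ i, (v i : ℝ) ^ 2 + (∑ i, (v i : ℝ)) ^ 2 := by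
    exact_mod_cast two_le_sum_sq_add_sq_sum hv
  simp only [intCast] at h
  linarith

lemma homMin_voronoiFirstForm (a : Fin d) : homMin (voronoiFirstForm d) = 1 := by
  refine IsLeast.csInf_eq ⟨⟨Pi.single a 1, ?_, ?_⟩, ?_⟩
  · simp
  · simp [intCast_single, quadForm_single, voronoiFirstForm]
  · rintro r ⟨v, hv, rfl⟩
    exact one_le_quadForm_voronoiFirstForm_intCast hv

lemma single_mem_minVecs_voronoiFirstForm (a : Fin d) :
    Pi.single a 1 ∈ minVecs (voronoiFirstForm d) := by
  refine ⟨by simp, ?_⟩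
  rw [intCast_single, quadForm_single, homMin_voronoiFirstForm a]
  simp [voronoiFirstForm]

lemma single_sub_single_mem_minVecs_voronoiFirstForm {a b : Fin d} (hab : a ≠ b) :
    Pi.single a 1 - Pi.single b 1 ∈ minVecs (voronoiFirstForm d) := by
  refine ⟨sub_ne_zero.mpr fun h => ?_, ?_⟩
  · simpa [Pi.single_apply, hab] using congrFun h a
  · rw [intCast_sub, intCast_single, intCast_single, quadForm_single_sub_single,
      homMin_voronoiFirstForm a]
    simp [voronoiFirstForm, hab, hab.symm]
    norm_num

end Voronoi

theorem voronoiFirstForm_is_perfect_general (d : ℕ) :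
    IsPQF (voronoiFirstForm d) ∧ IsPerfectForm (voronoiFirstForm d) :=
  ⟨⟨isSymm_voronoiFirstForm d, posDef_voronoiFirstForm d⟩,
    isPerfectForm_of_single_mem_minVecs (isSymm_voronoiFirstForm d)
      single_mem_minVecs_voronoiFirstForm
      fun _ _ => single_sub_single_mem_minVecs_voronoiFirstForm⟩

/-- Voronoi's first perfect form is a perfect PQF. -/
theorem voronoiFirstForm_is_perfect (d : ℕ) (hd : 1 ≤ d) :
    IsPQF (voronoiFirstForm d) ∧ IsPerfectForm (voronoiFirstForm d) :=
  voronoiFirstForm_is_perfect_general d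
end
end

section
/- Every positive definite quadratic form in d variables is arithmetically equivalent to a Minkowski reduced positive definite quadratic form; that is, for every PQF Q there exists U ∈ GL_d(ℤ) such that UᵀQU is Minkowski reduced. -/
open Matrix

noncomputable section

/-- The gcd of the tail `(x_i, …, x_d)` of an integer vector. -/
def tailGcd {d : ℕ} (i : Fin d) (x : Fin d → ℤ) : ℤ :=
  Finset.gcd (Finset.univ.filter fun j => i ≤ j) x

/-- Minkowski reduction conditions (i) and (ii). -/
def IsMinkowskiReduced {d : ℕ} (Q : Matrix (Fin d) (Fin d) ℝ) : Prop :=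
  (∀ i : Fin d, ∀ x : Fin d → ℤ, tailGcd i x = 1 → Q i i ≤ quadForm Q (intCast x)) ∧
  (∀ i j : Fin d, (j : ℕ) = (i : ℕ) + 1 → 0 ≤ Q i j)

/-!
Choose a basis `U` of `ℤ^d` whose value vector `(Q[u₁], …, Q[u_d])` is lexicographically
minimal; it exists because `Q` takes only finitely many values below any bound on `ℤ^d`, which
makes the lexicographic order on value vectors well founded. If `gcd(x_i, …, x_d) = 1`, then
`u₁, …, u_{i-1}, Ux` extend to a basis of `ℤ^d`, so minimality gives `Q[Ux] ≥ Q[u_i]`: this is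
condition (i). Flipping the signs of basis vectors keeps the value vector and can make every
superdiagonal entry nonnegative, which is condition (ii).
-/

/-- A Bézout functional `f` with `f y = 1` splits `ℤ^ι = ℤ y ⊕ ker f`, and `ker f` is free. -/
lemma Matrix.exists_isUnit_det_col_eq {ι : Type*} [Fintype ι] [DecidableEq ι]
    (i₀ : ι) {y : ι → ℤ} (hy : Finset.univ.gcd y = 1) :
    ∃ D : Matrix ι ι ℤ, IsUnit D.det ∧ D.col i₀ = y := by
  obtain ⟨g, hg⟩ := Finset.gcd_eq_sum_mul Finset.univ y
  set f := dotProductBilin ℤ ℤ g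
  have hfy : f y = 1 := by
    rw [hy] at hg
    simp only [f, dotProductBilin_apply_apply, dotProduct, hg, mul_comm]
  obtain ⟨n, b⟩ := Submodule.basisOfPid (Pi.basisFun ℤ ι) (LinearMap.ker f)
  let B := Module.Basis.mkFinCons y b
    (fun c z hz h => by
      have := congrArg f h
      rwa [map_add, map_smul, hfy, LinearMap.mem_ker.1 hz, smul_eq_mul, mul_one, add_zero,
        map_zero] at this)
    (fun z => ⟨-f z, by
      rw [LinearMap.mem_ker, map_add, map_smul, hfy, smul_eq_mul, mul_one, add_neg_cancel]⟩)
  let e := B.indexEquiv (Pi.basisFun ℤ ι)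
  refine ⟨(Pi.basisFun ℤ ι).toMatrix (B.reindex (e.trans (Equiv.swap (e 0) i₀))),
    Matrix.isUnit_det_of_right_inverse (Module.Basis.toMatrix_mul_toMatrix_flip _ _), ?_⟩
  ext k
  simp [B, Module.Basis.toMatrix_apply]

lemma Matrix.exists_isUnit_det_cols_single_col_eq {ι : Type*} [Fintype ι] [DecidableEq ι]
    (p : ι → Prop) [DecidablePred p] {i₀ : ι} (hi₀ : ¬ p i₀) {x : ι → ℤ}
    (hx : (Finset.univ.filter (¬ p ·)).gcd x = 1) :
    ∃ V : Matrix ι ι ℤ, IsUnit V.det ∧ (∀ j, p j → V.col j = Pi.single j 1) ∧ V.col i₀ = x := by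
  have hx' : Finset.univ.gcd (fun j : {j // ¬ p j} => x j) = 1 := by
    have himage : Finset.univ.image (Subtype.val : {j // ¬ p j} → ι) =
        Finset.univ.filter (¬ p ·) := by
      ext; simp
    rw [← hx, ← himage, Finset.gcd_image]
    rfl
  obtain ⟨D, hD, hDi₀⟩ := Matrix.exists_isUnit_det_col_eq ⟨i₀, hi₀⟩ hx'
  let B : Matrix {j // p j} {j // ¬ p j} ℤ := Matrix.of fun a b => if (b : ι) = i₀ then x a else 0
  refine ⟨Matrix.reindex (Equiv.sumCompl p) (Equiv.sumCompl p) (Matrix.fromBlocks 1 B 0 D),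
    by simpa [Matrix.det_fromBlocks_zero₂₁] using hD, fun j hj => ?_, ?_⟩
  all_goals
    ext k
    by_cases hk : p k
  · simp [hj, hk, Pi.single_apply, Matrix.one_apply, Subtype.ext_iff]
  · simp [hj, hk, show k ≠ j by rintro rfl; exact hk hj]
  · simp [hi₀, hk, B]
  · simpa [hi₀, hk] using congrFun hDi₀ ⟨k, hk⟩

lemma quadForm_smul {d : ℕ} (Q : Matrix (Fin d) (Fin d) ℝ) (t : ℝ) (x : Fin d → ℝ) :
    quadForm Q (t • x) = t ^ 2 * quadForm Q x := by
  simp only [quadForm, mulVec_smul, dotProduct_smul, smul_dotProduct, smul_eq_mul]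
  ring

lemma continuous_quadForm {d : ℕ} (Q : Matrix (Fin d) (Fin d) ℝ) : Continuous (quadForm Q) :=
  continuous_id.dotProduct (continuous_const.matrix_mulVec continuous_id)

lemma Matrix.PosDef.exists_pos_mul_norm_sq_le_quadForm {d : ℕ} {Q : Matrix (Fin d) (Fin d) ℝ}
    (hQ : Q.PosDef) : ∃ m > 0, ∀ x, m * ‖x‖ ^ 2 ≤ quadForm Q x := by
  rcases isEmpty_or_nonempty (Fin d) with hd | hd
  · exact ⟨1, one_pos, fun x => by simp [Subsingleton.elim x 0, quadForm]⟩
  obtain ⟨s, hs, hmin⟩ := (isCompact_sphere (0 : Fin d → ℝ) 1).exists_isMinOn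
    (NormedSpace.sphere_nonempty.2 zero_le_one) (continuous_quadForm Q).continuousOn
  have hs_pos : 0 < quadForm Q s := by
    simpa [quadForm] using hQ.dotProduct_mulVec_pos (ne_zero_of_mem_unit_sphere ⟨s, hs⟩)
  refine ⟨quadForm Q s, hs_pos, fun x => ?_⟩
  rcases eq_or_ne x 0 with rfl | hx
  · simp [quadForm]
  have hx' : ‖x‖⁻¹ • x ∈ Metric.sphere (0 : Fin d → ℝ) 1 := by
    simp [norm_smul, hx]
  calc quadForm Q s * ‖x‖ ^ 2 ≤ quadForm Q (‖x‖⁻¹ • x) * ‖x‖ ^ 2 := by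
        gcongr; exact hmin hx'
    _ = quadForm Q x := by
        rw [quadForm_smul]; field_simp

lemma Matrix.PosDef.finite_setOf_quadForm_intCast_le {d : ℕ} {Q : Matrix (Fin d) (Fin d) ℝ}
    (hQ : Q.PosDef) (c : ℝ) : {v : Fin d → ℤ | quadForm Q (intCast v) ≤ c}.Finite := by
  obtain ⟨m, hm, hQm⟩ := hQ.exists_pos_mul_norm_sq_le_quadForm
  refine (isCompact_closedBall (0 : Fin d → ℤ) √(c / m)).finite_of_discrete.subset fun v hv => ?_
  rw [mem_closedBall_zero_iff, pi_norm_le_iff_of_nonneg (Real.sqrt_nonneg _)]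
  intro k
  rw [← Int.norm_cast_real]
  refine (norm_le_pi_norm (intCast v) k).trans (Real.le_sqrt_of_sq_le ?_)
  rw [le_div_iff₀ hm, mul_comm]
  exact (hQm _).trans hv

def intCongr {d : ℕ} (Q : Matrix (Fin d) (Fin d) ℝ) (U : Matrix (Fin d) (Fin d) ℤ) :
    Matrix (Fin d) (Fin d) ℝ :=
  (U.map ((↑) : ℤ → ℝ))ᵀ * Q * U.map ((↑) : ℤ → ℝ)

section intCongr

variable {d : ℕ}

lemma intCongr_mul (Q : Matrix (Fin d) (Fin d) ℝ) (U V : Matrix (Fin d) (Fin d) ℤ) :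
    intCongr Q (U * V) = intCongr (intCongr Q U) V := by
  simp only [intCongr, ← Int.coe_castRingHom, Matrix.map_mul, transpose_mul, Matrix.mul_assoc]

lemma quadForm_intCongr (Q : Matrix (Fin d) (Fin d) ℝ) (U : Matrix (Fin d) (Fin d) ℤ)
    (x : Fin d → ℤ) : quadForm (intCongr Q U) (intCast x) = quadForm Q (intCast (U *ᵥ x)) := by
  have hcast : intCast (U *ᵥ x) = U.map ((↑) : ℤ → ℝ) *ᵥ intCast x := by
    ext k
    simp [intCast, mulVec, dotProduct]
  rw [hcast, quadForm, quadForm, intCongr, ← mulVec_mulVec, ← mulVec_mulVec, dotProduct_mulVec,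
    vecMul_transpose]

lemma quadForm_intCast_single (Q : Matrix (Fin d) (Fin d) ℝ) (i : Fin d) :
    quadForm Q (intCast (Pi.single i 1)) = Q i i := by
  have : intCast (Pi.single i (1 : ℤ)) = Pi.single i 1 := by
    ext k
    simp [intCast, Pi.single_apply]
  simp [quadForm, this]

lemma intCongr_apply_self (Q : Matrix (Fin d) (Fin d) ℝ) (U : Matrix (Fin d) (Fin d) ℤ)
    (i : Fin d) : intCongr Q U i i = quadForm Q (intCast (U.col i)) := by
  rw [← quadForm_intCast_single (intCongr Q U), quadForm_intCongr, mulVec_single_one]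

lemma intCongr_diagonal_apply (Q : Matrix (Fin d) (Fin d) ℝ) (ε : Fin d → ℤ) (i j : Fin d) :
    intCongr Q (diagonal ε) i j = ε i * Q i j * ε j := by
  simp [intCongr, diagonal_map, diagonal_transpose, mul_diagonal, diagonal_mul]

end intCongr

lemma Matrix.PosDef.isWF_range_quadForm_intCast {d : ℕ} {Q : Matrix (Fin d) (Fin d) ℝ}
    (hQ : Q.PosDef) : (Set.range fun v : Fin d → ℤ => quadForm Q (intCast v)).IsWF := by
  rw [Set.isWF_iff_no_descending_seq]
  intro f hf hmem
  apply Set.infinite_range_of_injective hf.injective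
  refine ((hQ.finite_setOf_quadForm_intCast_le (f 0)).image
    fun v => quadForm Q (intCast v)).subset ?_
  rintro _ ⟨n, rfl⟩
  obtain ⟨v, hv⟩ := hmem n
  exact ⟨v, by simpa [hv] using hf.antitone (Nat.zero_le n), hv⟩

def IsLexMinBasis {d : ℕ} (Q : Matrix (Fin d) (Fin d) ℝ) (U : Matrix (Fin d) (Fin d) ℤ) : Prop :=
  IsUnit U.det ∧ ∀ W : Matrix (Fin d) (Fin d) ℤ, IsUnit W.det →
    ¬ toLex (intCongr Q W).diag < toLex (intCongr Q U).diag

section IsLexMinBasis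

variable {d : ℕ} {Q : Matrix (Fin d) (Fin d) ℝ} {U : Matrix (Fin d) (Fin d) ℤ}

lemma Matrix.PosDef.exists_isLexMinBasis (hQ : Q.PosDef) : ∃ U, IsLexMinBasis Q U := by
  set V := Set.range fun v : Fin d → ℤ => quadForm Q (intCast v)
  have hwf : WellFounded
      (Pi.Lex (β := fun _ : Fin d => ℝ) (· < ·) (fun {_} a b => a < b ∧ a ∈ V ∧ b ∈ V)) :=
    Pi.Lex.wellFounded _ fun _ => Set.wellFoundedOn_iff.1 hQ.isWF_range_quadForm_intCast
  obtain ⟨U, hU, hmin⟩ :=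
    (InvImage.wf (fun U => (intCongr Q U).diag) hwf).has_min {U | IsUnit U.det} ⟨1, by simp⟩
  refine ⟨U, hU, fun W hW ⟨i, hi, hlt⟩ => hmin W hW ⟨i, hi, hlt, ?_, ?_⟩⟩ <;>
    exact ⟨_, (intCongr_apply_self _ _ i).symm⟩

lemma IsLexMinBasis.le_quadForm (hU : IsLexMinBasis Q U) {i : Fin d} {x : Fin d → ℤ}
    (hx : tailGcd i x = 1) : intCongr Q U i i ≤ quadForm (intCongr Q U) (intCast x) := by
  by_contra! hlt
  obtain ⟨V, hV, hV_single, hV_i⟩ :=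
    Matrix.exists_isUnit_det_cols_single_col_eq (· < i) (lt_irrefl i) (x := x)
      (by simpa [tailGcd] using hx)
  refine hU.2 (U * V) (by rw [det_mul]; exact hU.1.mul hV) ⟨i, fun j hj => ?_, ?_⟩
  · simp [intCongr_mul, intCongr_apply_self, hV_single j hj, quadForm_intCast_single]
  · simpa [intCongr_mul, intCongr_apply_self, hV_i] using hlt

lemma IsLexMinBasis.mul_diagonal (hU : IsLexMinBasis Q U) {ε : Fin d → ℤ}
    (hε : ∀ i, ε i * ε i = 1) : IsLexMinBasis Q (U * diagonal ε) := by
  have hdiag : (intCongr Q (U * diagonal ε)).diag = (intCongr Q U).diag := by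
    ext i
    have hεi : (ε i : ℝ) * ε i = 1 := by exact_mod_cast hε i
    rw [diag_apply, intCongr_mul, intCongr_diagonal_apply, mul_right_comm, hεi, one_mul, diag_apply]
  refine ⟨?_, by rw [hdiag]; exact hU.2⟩
  rw [det_mul, det_diagonal]
  exact hU.1.mul (IsUnit.prod_univ_iff.2 fun i => IsUnit.of_mul_eq_one _ (hε i))

end IsLexMinBasis

def signSeq {α : Type*} [Zero α] [LinearOrder α] (a : ℕ → α) : ℕ → ℤ
  | 0 => 1
  | n + 1 => if a n < 0 then -signSeq a n else signSeq a n

lemma signSeq_mul_self {α : Type*} [Zero α] [LinearOrder α] (a : ℕ → α) (n : ℕ) :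
    signSeq a n * signSeq a n = 1 := by
  induction n with
  | zero => rfl
  | succ n ih => rw [signSeq]; split_ifs <;> simpa using ih

lemma signSeq_mul_mul_signSeq_succ_nonneg {α : Type*} [CommRing α] [LinearOrder α]
    [IsOrderedRing α] (a : ℕ → α) (n : ℕ) :
    0 ≤ (signSeq a n : α) * a n * signSeq a (n + 1) := by
  have hsq : (signSeq a n : α) * signSeq a n = 1 := by
    rw [← Int.cast_mul, signSeq_mul_self, Int.cast_one]
  rw [signSeq]
  split_ifs with h
  · rw [Int.cast_neg, show (signSeq a n : α) * a n * -signSeq a n = -a n by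
      linear_combination (-a n) * hsq]
    exact neg_nonneg.2 h.le
  · rw [show (signSeq a n : α) * a n * signSeq a n = a n by linear_combination a n * hsq]
    exact not_lt.1 h

/-- Every PQF is arithmetically equivalent to a Minkowski reduced PQF. -/
theorem exists_minkowski_reduced {d : ℕ} (Q : Matrix (Fin d) (Fin d) ℝ) (hQ : IsPQF Q) :
    ∃ U : Matrix (Fin d) (Fin d) ℤ, IsUnit U.det ∧
      IsMinkowskiReduced ((U.map ((↑) : ℤ → ℝ))ᵀ * Q * U.map ((↑) : ℤ → ℝ)) := by
  obtain ⟨U, hU⟩ := hQ.2.exists_isLexMinBasis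
  let a : ℕ → ℝ := fun n => if h : n + 1 < d then intCongr Q U ⟨n, by omega⟩ ⟨n + 1, h⟩ else 0
  have hUε := hU.mul_diagonal (ε := fun i => signSeq a i) fun i => signSeq_mul_self a i
  refine ⟨_, hUε.1, fun i x hx => hUε.le_quadForm hx, fun i j hij => ?_⟩
  have hi : (i : ℕ) + 1 < d := hij ▸ j.2
  obtain rfl : j = ⟨i + 1, hi⟩ := Fin.ext hij
  have ha : a i = intCongr Q U i ⟨i + 1, hi⟩ := dif_pos hi
  change 0 ≤ intCongr Q _ i _
  simpa only [intCongr_mul, intCongr_diagonal_apply, ← ha]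
    using signSeq_mul_mul_signSeq_succ_nonneg a i
end
end

section
/- For every d ≥ 2, the set of minimal vectors of the quadratic form Q_{A*_d} (with diagonal entries d and off-diagonal entries −1) is exactly {±e_1, …, ±e_d, ±(e_1 + ⋯ + e_d)}, where e_i are the standard basis vectors of ℤ^d; in particular Min(Q_{A*_d}) contains exactly 2(d+1) elements and the homogeneous minimum is λ(Q_{A*_d}) = d. -/
open Matrix

noncomputable section

/-- The form `Q_{A*_d}` with diagonal entries `d` and off-diagonal entries `-1`. -/
def QAstar (d : ℕ) : Matrix (Fin d) (Fin d) ℝ :=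
  Matrix.of fun i j => if i = j then (d : ℝ) else -1


lemma abs_le_sq' (n : ℤ) : |n| ≤ n ^ 2 := by
  rcases le_or_gt 0 n with h | h
  · rw [abs_of_nonneg h]; nlinarith
  · rw [abs_of_neg h]; nlinarith

lemma one_le_sq_of_ne (n : ℤ) (h : n ≠ 0) : 1 ≤ n ^ 2 := by
  nlinarith [Int.one_le_abs h, abs_le_sq' n]

lemma int_lower (d : ℕ) (v : Fin d → ℤ) (hv : v ≠ 0) :
    (d : ℤ) ≤ ((d:ℤ)+1) * (∑ i, v i ^ 2) - (∑ i, v i) ^ 2 := by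
  set S := ∑ i, v i ^ 2 with hS
  set T := ∑ i, v i with hT
  have hS1 : 1 ≤ S := by
    obtain ⟨i, hi⟩ := Function.ne_iff.mp hv
    have hi' : v i ≠ 0 := by simpa using hi
    calc (1:ℤ) ≤ v i ^ 2 := one_le_sq_of_ne _ hi'
      _ ≤ S := Finset.single_le_sum (fun j _ => sq_nonneg (v j)) (Finset.mem_univ i)
  have hTS : T ^ 2 ≤ S ^ 2 := by
    have h1 : |T| ≤ S := by
      calc |T| ≤ ∑ i, |v i| := Finset.abs_sum_le_sum_abs _ _
        _ ≤ ∑ i, v i ^ 2 := Finset.sum_le_sum fun i _ => abs_le_sq' (v i)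
    calc T ^ 2 = |T| ^ 2 := (sq_abs T).symm
      _ ≤ S ^ 2 := by nlinarith [abs_nonneg T]
  have hTd : T ^ 2 ≤ d * S := by
    have := sq_sum_le_card_mul_sum_sq (s := (Finset.univ : Finset (Fin d))) (f := v)
    simpa using this
  rcases le_or_gt S d with h | h
  · nlinarith
  · nlinarith

lemma int_eq_cases (d : ℕ) (v : Fin d → ℤ) (hv : v ≠ 0)
    (heq : ((d:ℤ)+1) * (∑ i, v i ^ 2) - (∑ i, v i) ^ 2 = d) :
    (∃ i, v = Pi.single i 1) ∨ (∃ i, v = -Pi.single i 1) ∨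
      v = (fun _ => 1) ∨ v = (fun _ => -1) := by
  set S := ∑ i, v i ^ 2 with hS
  set T := ∑ i, v i with hT
  have hS1 : 1 ≤ S := by
    obtain ⟨i, hi⟩ := Function.ne_iff.mp hv
    have hi' : v i ≠ 0 := by simpa using hi
    calc (1:ℤ) ≤ v i ^ 2 := one_le_sq_of_ne _ hi'
      _ ≤ S := Finset.single_le_sum (fun j _ => sq_nonneg (v j)) (Finset.mem_univ i)
  have hTS : T ^ 2 ≤ S ^ 2 := by
    have h1 : |T| ≤ S := by
      calc |T| ≤ ∑ i, |v i| := Finset.abs_sum_le_sum_abs _ _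
        _ ≤ ∑ i, v i ^ 2 := Finset.sum_le_sum fun i _ => abs_le_sq' (v i)
    calc T ^ 2 = |T| ^ 2 := (sq_abs T).symm
      _ ≤ S ^ 2 := by nlinarith [abs_nonneg T]
  have hTd : T ^ 2 ≤ d * S := by
    have := sq_sum_le_card_mul_sum_sq (s := (Finset.univ : Finset (Fin d))) (f := v)
    simpa using this
  have hSd : S ≤ d := by nlinarith
  have hcase : S = 1 ∨ S = (d:ℤ) := by
    rcases lt_or_ge 1 S with h1 | h1
    · right; nlinarith
    · left; omega
  rcases hcase with h1 | hd'
  · -- S = 1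
    obtain ⟨i, hi⟩ := Function.ne_iff.mp hv
    have hi' : v i ≠ 0 := by simpa using hi
    have hi1 : v i ^ 2 = 1 := by
      have hle : v i ^ 2 ≤ S := Finset.single_le_sum (fun j _ => sq_nonneg (v j)) (Finset.mem_univ i)
      have := one_le_sq_of_ne _ hi'
      omega
    have hrest : ∀ j, j ≠ i → v j = 0 := by
      intro j hj
      by_contra hj0
      have hj1 : 1 ≤ v j ^ 2 := one_le_sq_of_ne _ hj0
      have hji : j ∈ Finset.univ.erase i := Finset.mem_erase.mpr ⟨hj, Finset.mem_univ j⟩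
      have h3 : v j ^ 2 ≤ ∑ k ∈ Finset.univ.erase i, v k ^ 2 :=
        Finset.single_le_sum (fun k _ => sq_nonneg (v k)) hji
      have h4 : v i ^ 2 + ∑ k ∈ Finset.univ.erase i, v k ^ 2 = S :=
        Finset.add_sum_erase Finset.univ (fun k => v k ^ 2) (Finset.mem_univ i)
      omega
    have hvfun : v = Pi.single i (v i) := by
      funext j
      rcases eq_or_ne j i with rfl | hj
      · simp
      · rw [hrest j hj, Pi.single_eq_of_ne hj]
    rcases sq_eq_one_iff.mp hi1 with h | h
    · left; exact ⟨i, by rw [hvfun, h]⟩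
    · right; left; exact ⟨i, by rw [hvfun, h]; ext j; simp [Pi.single_apply]; split <;> simp⟩
  · -- S = d
    have hT2 : T ^ 2 = (d:ℤ) ^ 2 := by rw [hd'] at heq; ring_nf; ring_nf at heq; nlinarith
    have hTcase : T = d ∨ T = -d := sq_eq_sq_iff_eq_or_eq_neg.mp hT2 |>.imp id id
    rcases hTcase with hTd' | hTd'
    · right; right; left
      have hzero : ∑ i, (v i ^ 2 - v i) = 0 := by
        rw [Finset.sum_sub_distrib, ← hS, ← hT, hd', hTd']; ring
      have hall : ∀ i ∈ Finset.univ, v i ^ 2 - v i = 0 :=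
        (Finset.sum_eq_zero_iff_of_nonneg (fun i _ => by nlinarith [abs_le_sq' (v i), le_abs_self (v i)])).mp hzero
      have h01 : ∀ i, v i = 0 ∨ v i = 1 := by
        intro i
        have := hall i (Finset.mem_univ i)
        have : v i * (v i - 1) = 0 := by nlinarith
        rcases mul_eq_zero.mp this with h | h
        · left; exact h
        · right; omega
      have hzero2 : ∑ i, (1 - v i) = 0 := by
        rw [Finset.sum_sub_distrib, ← hT, hTd']; simp
      have hall2 : ∀ i ∈ Finset.univ, 1 - v i = 0 :=
        (Finset.sum_eq_zero_iff_of_nonneg (fun i _ => by rcases h01 i with h | h <;> omega)).mp hzero2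
      funext i
      have := hall2 i (Finset.mem_univ i)
      omega
    · right; right; right
      have hzero : ∑ i, (v i ^ 2 + v i) = 0 := by
        rw [Finset.sum_add_distrib, ← hS, ← hT, hd', hTd']; ring
      have hall : ∀ i ∈ Finset.univ, v i ^ 2 + v i = 0 :=
        (Finset.sum_eq_zero_iff_of_nonneg (fun i _ => by nlinarith [abs_le_sq' (v i), neg_abs_le (v i)])).mp hzero
      have h01 : ∀ i, v i = 0 ∨ v i = -1 := by
        intro i
        have := hall i (Finset.mem_univ i)
        have : v i * (v i + 1) = 0 := by nlinarith
        rcases mul_eq_zero.mp this with h | h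
        · left; exact h
        · right; omega
      have hzero2 : ∑ i, (1 + v i) = 0 := by
        rw [Finset.sum_add_distrib, ← hT, hTd']; simp
      have hall2 : ∀ i ∈ Finset.univ, 1 + v i = 0 :=
        (Finset.sum_eq_zero_iff_of_nonneg (fun i _ => by rcases h01 i with h | h <;> omega)).mp hzero2
      funext i
      have := hall2 i (Finset.mem_univ i)
      omega

lemma quad_eval (d : ℕ) (x : Fin d → ℝ) :
    quadForm (QAstar d) x = ((d:ℝ)+1) * (∑ i, x i ^ 2) - (∑ i, x i) ^ 2 := by
  have h1 : ∀ i : Fin d, (∑ j, (if i = j then (d:ℝ) else -1) * x j)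
      = ((d:ℝ)+1) * x i - ∑ j, x j := by
    intro i
    have h2 : ∀ j : Fin d, (if i = j then (d:ℝ) else -1) * x j
        = (if i = j then ((d:ℝ)+1) * x j else 0) - x j := by
      intro j
      by_cases h : i = j
      · simp [h]; ring
      · simp [h]
    rw [Finset.sum_congr rfl fun j _ => h2 j, Finset.sum_sub_distrib,
      Finset.sum_ite_eq]
    simp
  simp only [quadForm, dotProduct, mulVec, QAstar, of_apply]
  rw [Finset.sum_congr rfl fun i _ => by rw [h1 i]]
  rw [Finset.sum_congr rfl (fun i _ => by ring :
    ∀ i ∈ Finset.univ, x i * (((d:ℝ)+1) * x i - ∑ j, x j)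
      = ((d:ℝ)+1) * x i ^ 2 - (∑ j, x j) * x i)]
  rw [Finset.sum_sub_distrib, ← Finset.mul_sum, ← Finset.mul_sum]
  ring

lemma quad_int (d : ℕ) (v : Fin d → ℤ) :
    quadForm (QAstar d) (intCast v)
      = ((((d:ℤ)+1) * (∑ i, v i ^ 2) - (∑ i, v i) ^ 2 : ℤ) : ℝ) := by
  rw [quad_eval]
  push_cast [intCast]
  norm_num

-- values on the special vectors (integer level)
lemma sum_sq_single (d : ℕ) (i : Fin d) : ∑ j, (Pi.single i (1:ℤ)) j ^ 2 = (1:ℤ) := by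
  simp [Pi.single_apply]
lemma sum_single (d : ℕ) (i : Fin d) : ∑ j, (Pi.single i (1:ℤ)) j = (1:ℤ) := by
  simp [Pi.single_apply]
lemma sum_sq_negsingle (d : ℕ) (i : Fin d) : ∑ j, (-Pi.single i (1:ℤ)) j ^ 2 = (1:ℤ) := by
  simp [Pi.single_apply, ite_pow]
lemma sum_negsingle (d : ℕ) (i : Fin d) : ∑ j, (-Pi.single i (1:ℤ)) j = (-1:ℤ) := by
  simp [Pi.single_apply]
lemma sum_sq_ones (d : ℕ) : ∑ _i : Fin d, (1:ℤ) ^ 2 = d := by simp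
lemma val_special (d : ℕ) (v : Fin d → ℤ)
    (h : (∃ i, v = Pi.single i 1) ∨ (∃ i, v = -Pi.single i 1) ∨
      v = (fun _ => 1) ∨ v = (fun _ => -1)) :
    ((d:ℤ)+1) * (∑ i, v i ^ 2) - (∑ i, v i) ^ 2 = d := by
  rcases h with ⟨i, rfl⟩ | ⟨i, rfl⟩ | rfl | rfl
  · rw [sum_sq_single, sum_single]; ring
  · rw [sum_sq_negsingle, sum_negsingle]; ring
  · simp; ring
  · simp; ring

lemma count_set (d : ℕ) (hd : 2 ≤ d) :
    ({v : Fin d → ℤ | (∃ i, v = Pi.single i 1) ∨ (∃ i, v = -Pi.single i 1) ∨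
        v = (fun _ => 1) ∨ v = (fun _ => -1)}).ncard = 2 * (d + 1) := by
  classical
  have hnt : Nontrivial (Fin d) := Fin.nontrivial_iff_two_le.mpr hd
  set A : Finset (Fin d → ℤ) := Finset.univ.image (fun i => Pi.single i (1:ℤ)) with hA
  set B : Finset (Fin d → ℤ) := Finset.univ.image (fun i => -Pi.single i (1:ℤ)) with hB
  set P : Finset (Fin d → ℤ) := {(fun _ => (1:ℤ)), (fun _ => (-1:ℤ))} with hP
  have hinj : Function.Injective (fun i : Fin d => Pi.single i (1:ℤ)) := by
    intro i j h
    by_contra hij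
    have := congrFun h i
    simp only [Pi.single_eq_same, Pi.single_eq_of_ne hij] at this
    exact one_ne_zero this
  have hinj2 : Function.Injective (fun i : Fin d => -Pi.single i (1:ℤ)) := by
    intro i j h
    exact hinj (neg_injective h)
  have hcardA : A.card = d := by rw [hA, Finset.card_image_of_injective _ hinj]; simp
  have hcardB : B.card = d := by rw [hB, Finset.card_image_of_injective _ hinj2]; simp
  have i0 : Fin d := ⟨0, by omega⟩
  have hone_ne : (fun _ : Fin d => (1:ℤ)) ≠ (fun _ : Fin d => (-1:ℤ)) := by
    intro h
    have := congrFun h i0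
    norm_num at this
  have hcardP : P.card = 2 := by rw [hP, Finset.card_insert_of_notMem (by simpa using hone_ne), Finset.card_singleton]
  have hAB : Disjoint A B := by
    rw [Finset.disjoint_left]
    rintro v hv hv'
    simp only [hA, hB, Finset.mem_image, Finset.mem_univ, true_and] at hv hv'
    obtain ⟨i, rfl⟩ := hv
    obtain ⟨j, hj⟩ := hv'
    have := congrFun hj i
    simp only [Pi.neg_apply, Pi.single_eq_same, Pi.single_apply] at this
    split at this <;> omega
  have hABP : Disjoint (A ∪ B) P := by
    rw [Finset.disjoint_left]
    rintro v hv hv'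
    simp only [hP, Finset.mem_insert, Finset.mem_singleton] at hv'
    simp only [hA, hB, Finset.mem_union, Finset.mem_image, Finset.mem_univ, true_and] at hv
    rcases hv with ⟨i, rfl⟩ | ⟨i, rfl⟩ <;> rcases hv' with h | h
    · obtain ⟨j, hji⟩ := exists_ne i
      have := congrFun h j
      simp [Pi.single_eq_of_ne hji] at this
    · have := congrFun h i
      simp [Pi.single_eq_same] at this
    · have := congrFun h i
      simp [Pi.single_eq_same] at this
    · obtain ⟨j, hji⟩ := exists_ne i
      have := congrFun h j
      simp [Pi.single_eq_of_ne hji] at this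
  have hset : {v : Fin d → ℤ | (∃ i, v = Pi.single i 1) ∨ (∃ i, v = -Pi.single i 1) ∨
        v = (fun _ => 1) ∨ v = (fun _ => -1)} = ↑(A ∪ B ∪ P) := by
    ext v
    simp only [Set.mem_setOf_eq, Finset.coe_union, Set.mem_union, hA, hB, hP,
      Finset.coe_image, Finset.coe_univ, Set.image_univ, Set.mem_range,
      Finset.coe_insert, Finset.coe_singleton, Set.mem_insert_iff, Set.mem_singleton_iff]
    tauto
  rw [hset, Set.ncard_coe_finset, Finset.card_union_of_disjoint hABP,
    Finset.card_union_of_disjoint hAB, hcardA, hcardB, hcardP]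
  omega

lemma single_ne_zero' (d : ℕ) (i : Fin d) : (Pi.single i (1:ℤ) : Fin d → ℤ) ≠ 0 := by
  intro h
  have := congrFun h i
  simp at this

lemma in_set_ne_zero (d : ℕ) (hd : 2 ≤ d) (v : Fin d → ℤ)
    (h : (∃ i, v = Pi.single i 1) ∨ (∃ i, v = -Pi.single i 1) ∨
      v = (fun _ => 1) ∨ v = (fun _ => -1)) : v ≠ 0 := by
  have i0 : Fin d := ⟨0, by omega⟩
  rcases h with ⟨i, rfl⟩ | ⟨i, rfl⟩ | rfl | rfl
  · exact single_ne_zero' d i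
  · intro h
    have := congrFun h i
    simp at this
  · intro h
    have := congrFun h i0
    simp at this
  · intro h
    have := congrFun h i0
    simp at this

lemma quad_special (d : ℕ) (v : Fin d → ℤ)
    (h : (∃ i, v = Pi.single i 1) ∨ (∃ i, v = -Pi.single i 1) ∨
      v = (fun _ => 1) ∨ v = (fun _ => -1)) :
    quadForm (QAstar d) (intCast v) = (d : ℝ) := by
  rw [quad_int, val_special d v h]
  norm_num

lemma homMin_QAstar (d : ℕ) (hd : 2 ≤ d) : homMin (QAstar d) = (d : ℝ) := by
  have i0 : Fin d := ⟨0, by omega⟩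
  have hmem : (d : ℝ) ∈ {r | ∃ v : Fin d → ℤ, v ≠ 0 ∧ r = quadForm (QAstar d) (intCast v)} := by
    exact ⟨Pi.single i0 1, single_ne_zero' d i0,
      (quad_special d _ (Or.inl ⟨i0, rfl⟩)).symm⟩
  have hlb : ∀ r ∈ {r | ∃ v : Fin d → ℤ, v ≠ 0 ∧ r = quadForm (QAstar d) (intCast v)},
      (d : ℝ) ≤ r := by
    rintro r ⟨v, hv, rfl⟩
    rw [quad_int]
    exact_mod_cast int_lower d v hv
  exact le_antisymm (csInf_le ⟨(d:ℝ), hlb⟩ hmem) (le_csInf ⟨_, hmem⟩ hlb)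

/-- The minimal vectors of `Q_{A*_d}` are exactly `±e_1, …, ±e_d, ±(e_1 + ⋯ + e_d)`;
there are `2(d+1)` of them and the homogeneous minimum is `d`. -/
theorem minVecs_QAstar (d : ℕ) (hd : 2 ≤ d) :
    minVecs (QAstar d) =
      {v : Fin d → ℤ | (∃ i, v = Pi.single i 1) ∨ (∃ i, v = -Pi.single i 1) ∨
        v = (fun _ => 1) ∨ v = (fun _ => -1)} ∧
    (minVecs (QAstar d)).ncard = 2 * (d + 1) ∧
    homMin (QAstar d) = (d : ℝ) := by
  have hmm := homMin_QAstar d hd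
  have hsets : minVecs (QAstar d) =
      {v : Fin d → ℤ | (∃ i, v = Pi.single i 1) ∨ (∃ i, v = -Pi.single i 1) ∨
        v = (fun _ => 1) ∨ v = (fun _ => -1)} := by
    ext v
    constructor
    · rintro ⟨hv, hq⟩
      rw [hmm, quad_int] at hq
      exact int_eq_cases d v hv (by exact_mod_cast hq)
    · intro h
      exact ⟨in_set_ne_zero d hd v h, by rw [hmm]; exact quad_special d v h⟩
  refine ⟨hsets, ?_, hmm⟩
  rw [hsets]
  exact count_set d hd
end
end

section
/- For every d ≥ 2, the inhomogeneous minimum of the quadratic form Q_{A*_d} (with diagonal entries d and off-diagonal entries −1) equals μ(Q_{A*_d}) = d(d+2)/12. -/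
open Matrix

noncomputable section

/-! Put `z = (0, y) ∈ ℝ^(d+1)`. Then `2 Q_{A*_d}[y] = ∑_{i,j} (z i - z j)²`, and translating `y` by
`ℤ^d` amounts to translating each `z i` by an integer, so `μ` measures how evenly `d + 1` points can
be spread on the circle `ℝ/ℤ`.

At the deep hole `x_t = (t+1)/(d+1)`, every representative `z` is `(d+1)⁻¹` times a vector of
pairwise distinct integers, whose spread is at least that of `0, 1, …, d`.

Conversely, sort the fractional parts of `z` and lift them to a monotone `W : ℕ → ℝ` with
`W (d+1) = W 0 + 1`. Cutting the circle just after the `k`-th point gives another representative of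
`z`. Averaging these cuts with weights equal to the gaps `W (k+1) - W k` yields
`∑_{i,j} (|δ i j| - δ i j ²)`, where `δ i j = W i - W j`. This is at most `((d+1)² - 1)/6`, with
equality exactly when the points are equally spaced.
-/

open Finset

lemma Finset.exists_le_sum_mul {ι : Type*} {s : Finset ι} {a f : ι → ℝ}
    (ha : ∀ i ∈ s, 0 ≤ a i) (hsum : ∑ i ∈ s, a i = 1) : ∃ i ∈ s, f i ≤ ∑ j ∈ s, a j * f j := by
  obtain ⟨i, hi, hmin⟩ := s.exists_min_image f (nonempty_of_sum_ne_zero (f := a) (by simp [hsum]))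
  refine ⟨i, hi, ?_⟩
  calc f i = ∑ j ∈ s, a j * f i := by rw [← sum_mul, hsum, one_mul]
    _ ≤ ∑ j ∈ s, a j * f j := sum_le_sum fun j hj => mul_le_mul_of_nonneg_left (hmin j hj) (ha j hj)

section SumSqDiff

variable {ι κ : Type*} [Fintype ι] [Fintype κ]

def sumSqDiff (f : ι → ℝ) : ℝ := ∑ i, ∑ j, (f i - f j) ^ 2

lemma sumSqDiff_eq (f : ι → ℝ) :
    sumSqDiff f = 2 * (Fintype.card ι * ∑ i, f i ^ 2 - (∑ i, f i) ^ 2) := by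
  simp only [sumSqDiff, sub_sq, sum_add_distrib, sum_sub_distrib, sum_const, card_univ,
    nsmul_eq_mul, ← mul_sum, ← sum_mul]
  ring

lemma sumSqDiff_nonneg (f : ι → ℝ) : 0 ≤ sumSqDiff f := by
  unfold sumSqDiff; positivity

lemma sumSqDiff_add_const (f : ι → ℝ) (c : ℝ) :
    sumSqDiff (fun i => f i + c) = sumSqDiff f := by
  simp [sumSqDiff]

lemma sumSqDiff_const_mul (c : ℝ) (f : ι → ℝ) :
    sumSqDiff (fun i => c * f i) = c ^ 2 * sumSqDiff f := by
  simp only [sumSqDiff, mul_sum, ← mul_sub, mul_pow]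

lemma sumSqDiff_comp_equiv (f : ι → ℝ) (σ : κ ≃ ι) : sumSqDiff (f ∘ σ) = sumSqDiff f := by
  simp only [sumSqDiff, Function.comp_apply, Equiv.sum_comp σ (fun i => ∑ j, (f i - f (σ j)) ^ 2)]
  exact sum_congr rfl fun i _ => Equiv.sum_comp σ (fun j => (f i - f j) ^ 2)

lemma sum_sub_mul_eq_zero (w : ι → ℝ) {e : ι → ι → ℝ}
    (hrow : ∀ i, ∑ j, e i j = 0) (hcol : ∀ j, ∑ i, e i j = 0) :
    ∑ i, ∑ j, (w i - w j) * e i j = 0 := by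
  calc ∑ i, ∑ j, (w i - w j) * e i j = ∑ i, w i * ∑ j, e i j - ∑ j, w j * ∑ i, e i j := by
        simp only [sub_mul, sum_sub_distrib, mul_sum]
        rw [sum_comm (f := fun i j => w j * e i j)]
    _ = 0 := by simp [hrow, hcol]

end SumSqDiff

lemma sum_fin_cast (n : ℕ) : ∑ i : Fin n, (i : ℝ) = n * (n - 1) / 2 := by
  induction n with
  | zero => simp
  | succ n ih =>
    rw [Fin.sum_univ_castSucc]
    simp only [Fin.val_castSucc, ih, Fin.val_last, Nat.cast_add, Nat.cast_one]
    ring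

lemma sum_fin_cast_sq (n : ℕ) : ∑ i : Fin n, (i : ℝ) ^ 2 = n * (n - 1) * (2 * n - 1) / 6 := by
  induction n with
  | zero => simp
  | succ n ih =>
    rw [Fin.sum_univ_castSucc]
    simp only [Fin.val_castSucc, ih, Fin.val_last, Nat.cast_add, Nat.cast_one]
    ring

lemma sumSqDiff_fin_cast (n : ℕ) :
    sumSqDiff (fun i : Fin n => (i : ℝ)) = n ^ 2 * (n ^ 2 - 1) / 6 := by
  rw [sumSqDiff_eq, Fintype.card_fin, sum_fin_cast, sum_fin_cast_sq]; ring

lemma sq_sub_le_sq_sub_of_strictMono {n : ℕ} {c : Fin n → ℤ} (hc : StrictMono c)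
    (i j : Fin n) : ((i : ℤ) - j) ^ 2 ≤ (c i - c j) ^ 2 := by
  obtain _ | n := n
  · exact i.elim0
  have hmono : Monotone fun i : Fin (n + 1) => c i - i := by
    refine Fin.monotone_iff_le_succ.mpr fun i => ?_
    have := hc (Fin.castSucc_lt_succ (i := i))
    simp only [Fin.val_castSucc, Fin.val_succ]
    push_cast
    omega
  wlog hij : i ≤ j generalizing i j
  · rw [sub_sq_comm (i : ℤ), sub_sq_comm (c i)]
    exact this j i (le_of_not_ge hij)
  have hgap := hmono hij
  have hij' : (i : ℤ) ≤ j := by exact_mod_cast hij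
  nlinarith

lemma le_sumSqDiff_intCast_of_injective {n : ℕ} {b : Fin n → ℤ} (hb : b.Injective) :
    n ^ 2 * (n ^ 2 - 1) / 6 ≤ sumSqDiff (intCast b) := by
  set σ := Tuple.sort b
  have hc : StrictMono (b ∘ σ) :=
    (Tuple.monotone_sort b).strictMono_of_injective (hb.comp σ.injective)
  rw [← sumSqDiff_comp_equiv _ σ, ← sumSqDiff_fin_cast]
  refine sum_le_sum fun i _ => sum_le_sum fun j _ => ?_
  have h := sq_sub_le_sq_sub_of_strictMono hc i j
  simp only [intCast, Function.comp_apply] at h ⊢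
  exact_mod_cast h

lemma quadForm_QAstar {d : ℕ} (y : Fin d → ℝ) :
    quadForm (QAstar d) y = (d + 1) * ∑ i, y i ^ 2 - (∑ i, y i) ^ 2 := by
  have hrow : QAstar d *ᵥ y = fun i => (d + 1) * y i - ∑ j, y j := by
    ext i
    have hentry : ∀ j, QAstar d i j * y j = (d + 1) * (if i = j then y j else 0) - y j := by
      intro j
      simp only [QAstar, of_apply]
      split_ifs <;> ring
    simp only [mulVec, dotProduct, hentry, sum_sub_distrib, ← mul_sum, sum_ite_eq, mem_univ,
      if_true]
  have hdiag : ∑ i, y i * ((d + 1) * y i) = (d + 1) * ∑ i, y i ^ 2 := by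
    rw [mul_sum]; exact sum_congr rfl fun i _ => by ring
  simp only [quadForm, hrow, dotProduct, mul_sub, sum_sub_distrib, ← sum_mul, hdiag]
  ring

lemma two_mul_quadForm_QAstar {d : ℕ} (y : Fin d → ℝ) :
    2 * quadForm (QAstar d) y = sumSqDiff (vecCons 0 y) := by
  rw [quadForm_QAstar, sumSqDiff_eq, Fintype.card_fin, Fin.sum_univ_succ, Fin.sum_univ_succ]
  simp

lemma injective_val_sub_mul {n : ℕ} (m : Fin n → ℤ) :
    Function.Injective fun i : Fin n => (i : ℤ) - n * m i := by
  intro i j h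
  have := congrArg (· % (n : ℤ)) h
  simp only [Int.sub_mul_emod_self_left] at this
  rw [Int.emod_eq_of_lt (by positivity) (by exact_mod_cast i.isLt),
    Int.emod_eq_of_lt (by positivity) (by exact_mod_cast j.isLt)] at this
  exact Fin.ext (by exact_mod_cast this)

lemma quadForm_QAstar_nonneg {d : ℕ} (y : Fin d → ℝ) : 0 ≤ quadForm (QAstar d) y := by
  linarith [two_mul_quadForm_QAstar y, sumSqDiff_nonneg (vecCons 0 y)]

def deepHole (d : ℕ) : Fin d → ℝ := fun t => (t + 1) / (d + 1)

lemma le_quadForm_QAstar_deepHole_sub {d : ℕ} (v : Fin d → ℤ) :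
    d * (d + 2) / 12 ≤ quadForm (QAstar d) (deepHole d - intCast v) := by
  set n := d + 1
  have hn : (n : ℝ) ≠ 0 := by positivity
  set b : Fin n → ℤ := fun i => (i : ℤ) - n * vecCons 0 v i
  have hcons : vecCons 0 (deepHole d - intCast v) = fun i => (n : ℝ)⁻¹ * intCast b i := by
    ext i
    refine Fin.cases ?_ (fun t => ?_) i
    · simp [b, intCast]
    · simp only [cons_val_succ, Pi.sub_apply, deepHole, intCast, Fin.val_succ, b, n]
      push_cast
      field_simp
  have hb := le_sumSqDiff_intCast_of_injective (injective_val_sub_mul (vecCons 0 v))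
  have h2 := two_mul_quadForm_QAstar (deepHole d - intCast v)
  rw [hcons, sumSqDiff_const_mul] at h2
  have hval : (d : ℝ) * (d + 2) / 12 = (n : ℝ)⁻¹ ^ 2 * (n ^ 2 * (n ^ 2 - 1) / 6) / 2 := by
    field_simp; push_cast [n]; ring
  rw [hval]
  linarith [mul_le_mul_of_nonneg_left hb (sq_nonneg (n : ℝ)⁻¹)]

lemma mul_sum_abs_sub_of_monotone {n : ℕ} {w : Fin n → ℝ} (hw : Monotone w) :
    n * ∑ i, ∑ j, |w i - w j| = 2 * ∑ i, ∑ j, (w i - w j) * (i - j) := by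
  set s : Fin n → Fin n → ℝ := fun i j => (if j < i then 1 else 0) - if i < j then 1 else 0
  have habs : ∀ i j, |w i - w j| = (w i - w j) * s i j := by
    intro i j
    rcases lt_trichotomy i j with h | rfl | h
    · simp [s, h, h.not_gt, abs_of_nonpos (sub_nonpos.2 (hw h.le))]
    · simp
    · simp [s, h, h.not_gt, abs_of_nonneg (sub_nonneg.2 (hw h.le))]
  have hs : ∀ i : Fin n, ∑ j, s i j = 2 * i - n + 1 := by
    intro i
    simp only [s, sum_sub_distrib, sum_boole, filter_gt_eq_Iio, filter_lt_eq_Ioi, Fin.card_Iio,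
      Fin.card_Ioi]
    rw [Nat.sub_sub, Nat.cast_sub (by omega)]
    push_cast
    ring
  have hskew : ∀ i j, s j i = -s i j := by
    intro i j; simp only [s]; ring
  -- `n * s i j - 2 * (i - j)` has zero row sums, hence zero column sums by antisymmetry.
  have hsum : ∀ i : Fin n, ∑ j : Fin n, (n * s i j - 2 * ((i : ℝ) - j)) = 0 := by
    intro i
    rw [sum_sub_distrib, ← mul_sum, ← mul_sum, hs, sum_sub_distrib, sum_fin_cast]
    simp only [sum_const, card_univ, Fintype.card_fin, nsmul_eq_mul]
    ring
  have key := sum_sub_mul_eq_zero w hsum fun j => by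
    rw [← neg_eq_zero, ← hsum j, ← sum_neg_distrib]
    exact sum_congr rfl fun i _ => by rw [hskew]; ring
  rw [← sub_eq_zero, ← key, mul_sum, mul_sum, ← sum_sub_distrib]
  refine sum_congr rfl fun i _ => ?_
  rw [mul_sum, mul_sum, ← sum_sub_distrib]
  exact sum_congr rfl fun j _ => by rw [habs]; ring

lemma sum_abs_sub_sub_sq_le {n : ℕ} (hn : 0 < n) {w : Fin n → ℝ} (hw : Monotone w) :
    ∑ i, ∑ j, (|w i - w j| - (w i - w j) ^ 2) ≤ (n ^ 2 - 1) / 6 := by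
  have hn' : (0 : ℝ) < n ^ 2 := by positivity
  have key : n ^ 2 * ∑ i, ∑ j, (|w i - w j| - (w i - w j) ^ 2)
      = sumSqDiff (fun i : Fin n => (i : ℝ)) - sumSqDiff (fun i => n * w i - i) := by
    calc n ^ 2 * ∑ i, ∑ j, (|w i - w j| - (w i - w j) ^ 2)
        = n * (n * ∑ i, ∑ j, |w i - w j|) - n ^ 2 * ∑ i, ∑ j, (w i - w j) ^ 2 := by
          simp only [sum_sub_distrib]; ring
      _ = ∑ i, ∑ j, (n * (2 * ((w i - w j) * (i - j))) - n ^ 2 * (w i - w j) ^ 2) := by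
          rw [mul_sum_abs_sub_of_monotone hw]
          simp only [mul_sum, sum_sub_distrib]
      _ = _ := by
          rw [sumSqDiff, sumSqDiff, ← sum_sub_distrib]
          refine sum_congr rfl fun i _ => ?_
          rw [← sum_sub_distrib]
          exact sum_congr rfl fun j _ => by ring
  rw [sumSqDiff_fin_cast] at key
  have := sumSqDiff_nonneg (fun i => n * w i - i)
  rw [← mul_le_mul_iff_of_pos_left hn']
  linarith

def cut (W : ℕ → ℝ) (k i : ℕ) : ℝ := W i + if i ≤ k then 1 else 0

section PeriodicLift

variable {n : ℕ} {W : ℕ → ℝ}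

lemma sum_gap_mul_sq_cut_sub (hW : Monotone W) (hper : W n = W 0 + 1) {i j : ℕ} (hi : i < n)
    (hj : j < n) :
    ∑ k ∈ range n, (W (k + 1) - W k) * (cut W k i - cut W k j) ^ 2
      = |W i - W j| - (W i - W j) ^ 2 := by
  wlog hij : i ≤ j generalizing i j
  · simpa [sub_sq_comm, abs_sub_comm] using this hj hi (le_of_not_ge hij)
  -- The cut at `k` shifts `W i - W j` by one exactly when `k ∈ [i, j)`, and those gaps add up
  -- to `W j - W i`.
  have hterm : ∀ k, (W (k + 1) - W k) * (cut W k i - cut W k j) ^ 2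
      = (W (k + 1) - W k) * (W i - W j) ^ 2
        + if k ∈ Ico i j then (W (k + 1) - W k) * (1 + 2 * (W i - W j)) else 0 := by
    intro k
    simp only [cut, mem_Ico]
    split_ifs <;> first | omega | ring
  have hIco : Ico i j ⊆ range n := fun k hk => mem_range.2 ((mem_Ico.1 hk).2.trans hj)
  rw [sum_congr rfl fun k _ => hterm k, sum_add_distrib, ← sum_mul, sum_range_sub, hper,
    sum_ite_mem, inter_eq_right.2 hIco, ← sum_mul, sum_Ico_sub W hij,
    abs_of_nonpos (sub_nonpos.2 (hW hij))]
  ring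

lemma sum_gap_mul_sumSqDiff_cut (hW : Monotone W) (hper : W n = W 0 + 1) :
    ∑ k ∈ range n, (W (k + 1) - W k) * sumSqDiff (fun i : Fin n => cut W k i)
      = ∑ i : Fin n, ∑ j : Fin n, (|W i - W j| - (W i - W j) ^ 2) := by
  simp only [sumSqDiff, mul_sum]
  rw [sum_comm]
  refine sum_congr rfl fun i _ => ?_
  rw [sum_comm]
  exact sum_congr rfl fun j _ => sum_gap_mul_sq_cut_sub hW hper i.isLt j.isLt

lemma exists_sumSqDiff_cut_le (hn : 0 < n) (hW : Monotone W) (hper : W n = W 0 + 1) :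
    ∃ k, sumSqDiff (fun i : Fin n => cut W k i) ≤ (n ^ 2 - 1) / 6 := by
  obtain ⟨k, -, hk⟩ := exists_le_sum_mul (s := range n) (a := fun k => W (k + 1) - W k)
    (f := fun k => sumSqDiff (fun i : Fin n => cut W k i))
    (fun k _ => sub_nonneg.2 (hW k.le_succ)) (by rw [sum_range_sub, hper]; ring)
  refine ⟨k, hk.trans ?_⟩
  rw [sum_gap_mul_sumSqDiff_cut hW hper]
  exact sum_abs_sub_sub_sq_le hn (hW.comp Fin.val_strictMono.monotone)

end PeriodicLift

lemma exists_sumSqDiff_sub_intCast_le {n : ℕ} (hn : 0 < n) (f : Fin n → ℝ) :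
    ∃ m : Fin n → ℤ, sumSqDiff (f - intCast m) ≤ (n ^ 2 - 1) / 6 := by
  set u := fun i => Int.fract (f i)
  set σ := Tuple.sort u
  have hmono : Monotone (u ∘ σ) := Tuple.monotone_sort u
  set W : ℕ → ℝ := fun i => if h : i < n then u (σ ⟨i, h⟩) else u (σ ⟨0, hn⟩) + 1
  have hW : Monotone W := by
    refine monotone_nat_of_le_succ fun i => ?_
    simp only [W]
    split_ifs with h₁
    · exact hmono (Fin.mk_le_mk.2 i.le_succ)
    · linarith [Int.fract_lt_one (f (σ ⟨i, h₁⟩)), Int.fract_nonneg (f (σ ⟨0, hn⟩))]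
    · omega
    · rfl
  obtain ⟨k, hk⟩ := exists_sumSqDiff_cut_le hn hW (by simp [W, hn])
  refine ⟨fun i => ⌊f i⌋ - if (σ.symm i : ℕ) ≤ k then 1 else 0, ?_⟩
  have hperm : f - intCast (fun i => ⌊f i⌋ - if (σ.symm i : ℕ) ≤ k then 1 else 0)
      = (fun i : Fin n => cut W k i) ∘ σ.symm := by
    ext i
    simp only [Pi.sub_apply, intCast, Function.comp_apply, cut, W, u, Fin.is_lt, dif_pos,
      Fin.eta, Equiv.apply_symm_apply, Int.fract]
    push_cast
    ring
  rw [hperm, sumSqDiff_comp_equiv]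
  exact hk

lemma exists_quadForm_QAstar_sub_intCast_le {d : ℕ} (x : Fin d → ℝ) :
    ∃ v : Fin d → ℤ, quadForm (QAstar d) (x - intCast v) ≤ d * (d + 2) / 12 := by
  obtain ⟨m, hm⟩ := exists_sumSqDiff_sub_intCast_le d.succ_pos (vecCons 0 x)
  refine ⟨fun t => m t.succ - m 0, ?_⟩
  have hcons : vecCons 0 (x - intCast fun t => m t.succ - m 0)
      = fun i => (vecCons 0 x - intCast m) i + m 0 := by
    ext i
    refine Fin.cases ?_ (fun t => ?_) i
    · simp [intCast]
    · simp only [cons_val_succ, Pi.sub_apply, intCast, Int.cast_sub]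
      ring
  have h2 := two_mul_quadForm_QAstar (x - intCast fun t => m t.succ - m 0)
  rw [hcons, sumSqDiff_add_const] at h2
  push_cast at hm
  linarith

theorem inhomMin_QAstar_general (d : ℕ) :
    inhomMin (QAstar d) = (d : ℝ) * ((d : ℝ) + 2) / 12 := by
  have hbdd (x : Fin d → ℝ) :
      BddBelow (Set.range fun v : Fin d → ℤ => quadForm (QAstar d) (x - intCast v)) :=
    ⟨0, Set.forall_mem_range.2 fun _ => quadForm_QAstar_nonneg _⟩
  have hle (x : Fin d → ℝ) :
      ⨅ v : Fin d → ℤ, quadForm (QAstar d) (x - intCast v) ≤ d * (d + 2) / 12 :=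
    let ⟨v, hv⟩ := exists_quadForm_QAstar_sub_intCast_le x
    ciInf_le_of_le (hbdd x) v hv
  exact le_antisymm (ciSup_le hle) <| le_ciSup_of_le ⟨_, Set.forall_mem_range.2 hle⟩ (deepHole d)
    (le_ciInf le_quadForm_QAstar_deepHole_sub)

/-- The inhomogeneous minimum of `Q_{A*_d}` equals `d(d+2)/12`. -/
theorem inhomMin_QAstar (d : ℕ) (hd : 2 ≤ d) :
    inhomMin (QAstar d) = (d : ℝ) * ((d : ℝ) + 2) / 12 :=
  inhomMin_QAstar_general d
end
end

section
/- For every positive definite quadratic form Q in 2 variables, the packing density satisfies δ(Q) ≤ π/√12 = 0.9069…, i.e., the hexagonal form Q_{A_2} (with Q[x] = x_1² + x_1x_2 + x_2²) attains the maximal lattice packing density in dimension 2. -/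
open Matrix

noncomputable section

/-- The hexagonal form `Q_{A_2}`. -/
def QA2 : Matrix (Fin 2) (Fin 2) ℝ := !![1, 1/2; 1/2, 1]

/-! Lagrange's bound `λ(Q)² ≤ (4/3) det Q`. If `v` is a primitive vector with `Q[v] = t`,
complete it to a basis `v, w` of `ℤ²` and translate `w` by a multiple of `v` so that the mixed
term `B` satisfies `|B| ≤ t/2`; then `λ(Q) t ≤ Q[v] Q[w] = det Q + B² ≤ det Q + t²/4`. Since
`λ t - t²/4 ≥ (3/4) λ²` for `t ∈ [λ, 3λ]`, any primitive `v` with `Q[v] < 3λ` gives the bound,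
so the minimum need not be known to be attained. -/

def binaryForm (a b c x y : ℝ) : ℝ := a * x ^ 2 + 2 * b * x * y + c * y ^ 2

def binaryPolar (a b c p q u w : ℝ) : ℝ := a * p * u + b * (p * w + q * u) + c * q * w

lemma binaryForm_mul_add (a b c p q u w t : ℝ) :
    binaryForm a b c (t * p + u) (t * q + w) =
      binaryForm a b c p q * t ^ 2 + 2 * binaryPolar a b c p q u w * t + binaryForm a b c u w := by
  unfold binaryForm binaryPolar; ring

lemma binaryForm_mul_binaryForm_sub_binaryPolar_sq (a b c p q u w : ℝ) :
    binaryForm a b c p q * binaryForm a b c u w - binaryPolar a b c p q u w ^ 2 =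
      (a * c - b ^ 2) * (p * w - q * u) ^ 2 := by
  unfold binaryForm binaryPolar; ring

lemma exists_int_mul_quadratic_le {t : ℝ} (ht : 0 < t) (B C : ℝ) :
    ∃ x : ℤ, t * (t * x ^ 2 + 2 * B * x + C) ≤ t ^ 2 / 4 + (t * C - B ^ 2) := by
  refine ⟨round (-B / t), ?_⟩
  set x : ℝ := ((round (-B / t) : ℤ) : ℝ)
  have hround : |t * x + B| ≤ t / 2 := by
    have : t * x + B = t * -(-B / t - x) := by field_simp; ring
    rw [this, abs_mul, abs_neg, abs_of_pos ht]
    linarith [mul_le_mul_of_nonneg_left (abs_sub_round (-B / t)) ht.le]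
  have hsq : (t * x + B) ^ 2 ≤ (t / 2) ^ 2 := sq_le_sq' (abs_le.mp hround).1 (abs_le.mp hround).2
  nlinarith

lemma exists_isCoprime_binaryForm_le {a b c : ℝ} {p q : ℤ} (hpq : (p, q) ≠ 0)
    (hF : 0 ≤ binaryForm a b c p q) :
    ∃ p' q' : ℤ, IsCoprime p' q' ∧ binaryForm a b c p' q' ≤ binaryForm a b c p q := by
  have hgcd : 0 < Int.gcd p q :=
    Int.gcd_pos_iff.mpr (by simpa [Prod.ext_iff, or_iff_not_imp_left] using hpq)
  obtain ⟨g, p', q', hg, hcop, rfl, rfl⟩ := Int.exists_gcd_one' hgcd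
  have hscale :
      binaryForm a b c (p' * g : ℤ) (q' * g : ℤ) = (g : ℝ) ^ 2 * binaryForm a b c p' q' := by
    push_cast; unfold binaryForm; ring
  have hg1 : (1 : ℝ) ≤ (g : ℝ) ^ 2 := one_le_pow₀ (by exact_mod_cast hg)
  refine ⟨p', q', Int.isCoprime_iff_gcd_eq_one.mpr hcop, ?_⟩
  rw [hscale] at hF ⊢
  nlinarith

lemma mul_binaryForm_le_of_isCoprime {a b c m : ℝ} {p q : ℤ} (hpq : IsCoprime p q)
    (hpos : 0 < binaryForm a b c p q)
    (hm : ∀ x y : ℤ, (x, y) ≠ 0 → m ≤ binaryForm a b c x y) :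
    m * binaryForm a b c p q ≤ binaryForm a b c p q ^ 2 / 4 + (a * c - b ^ 2) := by
  obtain ⟨w, u, hwu⟩ := hpq
  set t := binaryForm a b c p q
  set B := binaryPolar a b c p q (-u) w
  obtain ⟨x, hx⟩ := exists_int_mul_quadratic_le hpos B (binaryForm a b c (-u) w)
  have hdet := binaryForm_mul_binaryForm_sub_binaryPolar_sq a b c p q (-u) w
  have hunimod : (p : ℝ) * w - q * -u = 1 := by
    exact_mod_cast (by linear_combination hwu : p * w - q * -u = 1)
  have hne : (x * p + -u, x * q + w) ≠ 0 := by
    intro h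
    simp only [Prod.ext_iff, Prod.fst_zero, Prod.snd_zero] at h
    have : p * (x * q + w) - q * (x * p + -u) = 1 := by linear_combination hwu
    rw [h.1, h.2] at this
    simp at this
  have hmx := hm _ _ hne
  push_cast at hmx
  rw [binaryForm_mul_add] at hmx
  rw [hunimod] at hdet
  nlinarith

section homMin

variable {d : ℕ} {Q : Matrix (Fin d) (Fin d) ℝ}

lemma intCast_ne_zero {v : Fin d → ℤ} (hv : v ≠ 0) : intCast v ≠ 0 := by
  contrapose! hv
  funext i
  simpa [intCast] using congrFun hv i

lemma quadForm_intCast_pos (hQ : Q.PosDef) {v : Fin d → ℤ} (hv : v ≠ 0) :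
    0 < quadForm Q (intCast v) :=
  hQ.dotProduct_mulVec_pos (intCast_ne_zero hv)

lemma homMin_nonneg (hQ : Q.PosDef) : 0 ≤ homMin Q :=
  Real.sInf_nonneg fun _ ⟨_, hv, hr⟩ => hr ▸ (quadForm_intCast_pos hQ hv).le

lemma homMin_le_quadForm (hQ : Q.PosDef) {v : Fin d → ℤ} (hv : v ≠ 0) :
    homMin Q ≤ quadForm Q (intCast v) :=
  csInf_le ⟨0, fun _ ⟨_, hw, hr⟩ => hr ▸ (quadForm_intCast_pos hQ hw).le⟩ ⟨v, hv, rfl⟩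

lemma exists_quadForm_lt_of_homMin_lt [NeZero d] {r : ℝ} (h : homMin Q < r) :
    ∃ v : Fin d → ℤ, v ≠ 0 ∧ quadForm Q (intCast v) < r := by
  obtain ⟨_, ⟨v, hv, rfl⟩, hlt⟩ :=
    exists_lt_of_csInf_lt (s := {r | ∃ v : Fin d → ℤ, v ≠ 0 ∧ r = quadForm Q (intCast v)})
      ⟨_, Pi.single 0 1, Pi.single_ne_zero_iff.mpr one_ne_zero, rfl⟩ h
  exact ⟨v, hv, hlt⟩

lemma homMin_eq_of_forall_le {v : Fin d → ℤ} (hv : v ≠ 0)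
    (hmin : ∀ w : Fin d → ℤ, w ≠ 0 → quadForm Q (intCast v) ≤ quadForm Q (intCast w)) :
    homMin Q = quadForm Q (intCast v) :=
  IsLeast.csInf_eq ⟨⟨v, hv, rfl⟩, fun _ ⟨w, hw, hr⟩ => hr ▸ hmin w hw⟩

end homMin

lemma quadForm_intCast_fin_two {Q : Matrix (Fin 2) (Fin 2) ℝ} (hQ : Q.IsSymm)
    (v : Fin 2 → ℤ) :
    quadForm Q (intCast v) = binaryForm (Q 0 0) (Q 0 1) (Q 1 1) (v 0) (v 1) := by
  simp only [quadForm, intCast, binaryForm, dotProduct, mulVec, Fin.sum_univ_two, hQ.apply 1 0]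
  ring

lemma homMin_sq_le_four_thirds_det {Q : Matrix (Fin 2) (Fin 2) ℝ} (hQ : IsPQF Q) :
    homMin Q ^ 2 ≤ 4 / 3 * Q.det := by
  obtain ⟨hsym, hpd⟩ := hQ
  have hdet : Q.det = Q 0 0 * Q 1 1 - Q 0 1 ^ 2 := by rw [det_fin_two, hsym.apply 1 0]; ring
  have hdet_pos := hpd.det_pos
  rcases (homMin_nonneg hpd).eq_or_lt with h0 | hm_pos
  · rw [← h0]; nlinarith
  have hF : ∀ x y : ℤ, (x, y) ≠ 0 →
      homMin Q ≤ binaryForm (Q 0 0) (Q 0 1) (Q 1 1) x y := by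
    intro x y hxy
    have hv : ![x, y] ≠ 0 := by simpa [funext_iff, Fin.forall_fin_two, Prod.ext_iff] using hxy
    simpa [quadForm_intCast_fin_two hsym] using homMin_le_quadForm hpd hv
  obtain ⟨v, hv, hlt⟩ := exists_quadForm_lt_of_homMin_lt (by linarith : homMin Q < 3 * homMin Q)
  rw [quadForm_intCast_fin_two hsym] at hlt
  have hv' : (v 0, v 1) ≠ 0 := by simpa [funext_iff, Fin.forall_fin_two, Prod.ext_iff] using hv
  obtain ⟨p, q, hpq, hle⟩ := exists_isCoprime_binaryForm_le hv' (by linarith [hF _ _ hv'])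
  have hmt : homMin Q ≤ binaryForm (Q 0 0) (Q 0 1) (Q 1 1) p q :=
    hF p q fun h => by
      obtain ⟨rfl, rfl⟩ := Prod.ext_iff.mp h
      exact not_isCoprime_zero_zero hpq
  have key := mul_binaryForm_le_of_isCoprime hpq (by linarith) hF
  nlinarith

lemma one_le_sq_add_mul_add_sq {x y : ℤ} (h : (x, y) ≠ 0) : 1 ≤ x ^ 2 + x * y + y ^ 2 := by
  rcases eq_or_ne y 0 with rfl | hy
  · have hx : x ≠ 0 := fun hx => h (by simp [hx])
    nlinarith [sq_pos_of_ne_zero hx]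
  · nlinarith [sq_pos_of_ne_zero hy, sq_nonneg (2 * x + y)]

lemma homMin_QA2 : homMin QA2 = 1 := by
  have hQA2 : ∀ v : Fin 2 → ℤ,
      quadForm QA2 (intCast v) = ((v 0 ^ 2 + v 0 * v 1 + v 1 ^ 2 : ℤ) : ℝ) := by
    intro v
    rw [quadForm_intCast_fin_two (by ext i j; fin_cases i <;> fin_cases j <;> rfl)]
    simp [QA2, binaryForm]
  have hmin : ∀ w : Fin 2 → ℤ, w ≠ 0 → (1 : ℝ) ≤ quadForm QA2 (intCast w) := by
    intro w hw
    rw [hQA2]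
    exact_mod_cast one_le_sq_add_mul_add_sq
      (by simpa [funext_iff, Fin.forall_fin_two, Prod.ext_iff] using hw)
  have he : quadForm QA2 (intCast ![1, 0]) = 1 := by simp [hQA2]
  rw [homMin_eq_of_forall_le (by simp) (he ▸ hmin), he]

lemma det_QA2 : QA2.det = 3 / 4 := by
  rw [QA2, det_fin_two_of]; norm_num

lemma ballVol_two : ballVol 2 = Real.pi := by
  rw [ballVol, EuclideanSpace.volume_ball]
  norm_num [Fintype.card_fin]
  exact Real.sq_sqrt Real.pi_pos.le

lemma packDensity_fin_two (Q : Matrix (Fin 2) (Fin 2) ℝ) :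
    packDensity Q = Real.pi / Real.sqrt 12 * Real.sqrt (3 / 4 * (homMin Q ^ 2 / Q.det)) := by
  have h12 : Real.sqrt 12 = 4 * Real.sqrt (3 / 4) := by
    rw [show (12 : ℝ) = 4 ^ 2 * (3 / 4) by norm_num, Real.sqrt_mul (by norm_num),
      Real.sqrt_sq (by norm_num)]
  rw [packDensity, ballVol_two, Real.sqrt_mul (by norm_num), h12]
  field_simp
  ring

/-- Lagrange's theorem: every binary PQF has packing density at most `π/√12`,
attained by the hexagonal form. -/
theorem packing_optimal_dim2 :
    (∀ Q : Matrix (Fin 2) (Fin 2) ℝ, IsPQF Q →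
      packDensity Q ≤ Real.pi / Real.sqrt 12) ∧
    packDensity QA2 = Real.pi / Real.sqrt 12 := by
  refine ⟨fun Q hQ => ?_, ?_⟩
  · have hdet := hQ.2.det_pos
    have hbound : 3 / 4 * (homMin Q ^ 2 / Q.det) ≤ 1 := by
      rw [← mul_div_assoc, div_le_one hdet]
      linarith [homMin_sq_le_four_thirds_det hQ]
    calc packDensity Q ≤ Real.pi / Real.sqrt 12 * 1 := by
          rw [packDensity_fin_two]
          gcongr
          exact Real.sqrt_le_one.mpr hbound
      _ = Real.pi / Real.sqrt 12 := mul_one _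
  · rw [packDensity_fin_two, homMin_QA2, det_QA2]
    norm_num
end
end
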